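/- arXiv:1909.13532 — 2 statements merged into one kernel-verified Lean document; each statement's English description precedes it below -/
import Mathlib

section
/- For every integer n with n = 6 or n ≥ 8, the graph D_n contains exactly 2n² − 10n + 12 copies of C₅; the graph D₇ contains exactly 41 copies of C₅. Equivalently, for n ≥ 8, D_n contains exactly 2(n−2)(n−3) copies of C₅. -/
open SimpleGraph

/-- The number of copies of the 5-cycle `C₅` in `G`, i.e. the number of (not necessarily
induced) subgraphs of `G` isomorphic to the cycle on 5 vertices; each 5-cycle is counted
once. -/
noncomputable def SimpleGraph.c5Count {V : Type*} (G : SimpleGraph V) : ℕ :=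
  Nat.card {H : G.Subgraph // Nonempty (H.coe ≃g cycleGraph 5)}

/-- The graph `D n` on `n` vertices: a cycle on the `n - 2` vertices `0, …, n-3`
(vertex `i` adjacent to vertex `(i+1) mod (n-2)`), together with two mutually nonadjacent
vertices `n-2` and `n-1`, each adjacent to every vertex of the cycle. -/
def Dgraph (n : ℕ) : SimpleGraph (Fin n) :=
  SimpleGraph.fromRel (fun a b =>
    ((a : ℕ) < n - 2 ∧ (b : ℕ) < n - 2 ∧ ((a : ℕ) + 1) % (n - 2) = (b : ℕ)) ∨
    ((a : ℕ) < n - 2 ∧ n - 2 ≤ (b : ℕ)))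

/-!
`D n` is the suspension of the cycle `C_m`, `m = n - 2`: two nonadjacent apexes joined to every
rim vertex. Classify a 5-cycle by the apexes it contains. Consecutive rim vertices on it differ
by `±1`, and the sign cannot change, as the cycle never revisits a vertex.
* Both apexes: `u a v b b' u` for a dart `(b, b')` of the rim and a rim vertex `a ∉ {b, b'}`,
  giving `2m(m - 2)` cycles.
* One apex: the apex followed by a rim path `i, i+1, i+2, i+3`, giving `2m` cycles when `m ≥ 4`.
* No apex: five rim steps of the same sign close up, so `m ∣ 5` and the cycle is the rim of `C_5`.
Hence there are `2m(m - 1) + [m = 5]` copies.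
-/

open Function
open scoped Fin.CommRing

namespace SimpleGraph

section Copies

variable {V W α : Type*} {G : SimpleGraph V} {G' : SimpleGraph W} {A : SimpleGraph α}

lemma Copy.toSubgraph_comp_iso (f : Copy A G) (e : A ≃g A) :
    (f.comp e.toCopy).toSubgraph = f.toSubgraph := by
  rw [Copy.toSubgraph, show (f.comp e.toCopy).toHom = f.toHom.comp e.toHom from rfl,
    Subgraph.map_comp, Subgraph.map_iso_top]

def Iso.mapSubgraph (e : G ≃g G') : G.Subgraph ≃ G'.Subgraph where
  toFun H := H.map e.toHom
  invFun H := H.map e.symm.toHom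
  left_inv H := by
    change (H.map e.toHom).map e.symm.toHom = H
    rw [← Subgraph.map_comp, show e.symm.toHom.comp e.toHom = Hom.id by ext; simp,
      Subgraph.map_id]
  right_inv H := by
    change (H.map e.symm.toHom).map e.toHom = H
    rw [← Subgraph.map_comp, show e.toHom.comp e.symm.toHom = Hom.id by ext; simp,
      Subgraph.map_id]

lemma Iso.c5Count_eq (e : G ≃g G') : G.c5Count = G'.c5Count :=
  Nat.card_congr <| e.mapSubgraph.subtypeEquiv fun H =>
    ⟨fun ⟨φ⟩ => ⟨(e.toCopy.isoSubgraphMap H).symm.trans φ⟩,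
     fun ⟨φ⟩ => ⟨(e.toCopy.isoSubgraphMap H).trans φ⟩⟩

end Copies

section CycleGraph

variable {V : Type*} {G : SimpleGraph V} {n m : ℕ}

lemma cycleGraph_adj_iff_eq_add_one [NeZero m] (hm : 2 ≤ m) {u v : Fin m} :
    (cycleGraph m).Adj u v ↔ v = u + 1 ∨ u = v + 1 := by
  obtain ⟨k, rfl⟩ := Nat.exists_eq_add_of_le' hm
  rw [cycleGraph_adj, sub_eq_iff_eq_add, sub_eq_iff_eq_add, add_comm 1, add_comm 1, or_comm]

lemma cycleGraph.eq_add_one_of_adj [NeZero m] (hm : 2 ≤ m) {x y z : Fin m}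
    (hyz : (cycleGraph m).Adj y z) (hzx : z ≠ x) (hxy : y = x + 1) : z = y + 1 :=
  ((cycleGraph_adj_iff_eq_add_one hm).1 hyz).resolve_right
    fun h => hzx (add_right_cancel (h.symm.trans hxy))

lemma cycleGraph.add_one_eq_of_adj [NeZero m] (hm : 2 ≤ m) {x y z : Fin m}
    (hyz : (cycleGraph m).Adj y z) (hzx : z ≠ x) (hxy : x = y + 1) : y = z + 1 :=
  ((cycleGraph_adj_iff_eq_add_one hm).1 hyz).resolve_left fun h => hzx (h.trans hxy.symm)

lemma card_dart_cycleGraph (hm : 3 ≤ m) : Fintype.card (cycleGraph m).Dart = 2 * m := by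
  obtain ⟨k, rfl⟩ := Nat.exists_eq_add_of_le' hm
  simp [dart_card_eq_sum_degrees, cycleGraph_degree_three_le, mul_comm]

def cycleGraph.rotate (r : Fin (n + 2)) : cycleGraph (n + 2) ≃g cycleGraph (n + 2) :=
  ⟨Equiv.addRight r, by simp [cycleGraph_adj]⟩

def cycleGraph.reflect : cycleGraph (n + 2) ≃g cycleGraph (n + 2) :=
  ⟨Equiv.neg _, by simp [cycleGraph_adj, neg_add_eq_sub, or_comm]⟩

@[simp] lemma cycleGraph.rotate_apply (r j : Fin (n + 2)) : cycleGraph.rotate r j = j + r := rfl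

@[simp] lemma cycleGraph.reflect_apply (j : Fin (n + 2)) : cycleGraph.reflect j = -j := rfl

def Copy.ofCycle (c : Fin (n + 2) → V) (hc : Injective c)
    (hadj : ∀ i, G.Adj (c i) (c (i + 1))) : Copy (cycleGraph (n + 2)) G :=
  ⟨⟨c, fun {a b} h => by
    rcases (cycleGraph_adj_iff_eq_add_one (by omega)).1 h with rfl | rfl
    exacts [hadj a, (hadj b).symm]⟩, hc⟩

lemma Copy.adj_of_apply_eq (f : Copy (cycleGraph (n + 2)) G) {i : Fin (n + 2)} {x y : V}
    (hx : f i = x) (hy : f (i + 1) = y) : G.Adj x y :=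
  hx ▸ hy ▸ f.toHom.map_adj ((cycleGraph_adj_iff_eq_add_one (by omega)).2 (Or.inl rfl))

lemma Copy.toSubgraph_adj_cycle (f : Copy (cycleGraph (n + 2)) G) {x y : V} :
    f.toSubgraph.Adj x y ↔ ∃ i, f i = x ∧ f (i + 1) = y ∨ f (i + 1) = x ∧ f i = y := by
  simp only [Subgraph.map_adj, Subgraph.top_adj, Relation.Map,
    cycleGraph_adj_iff_eq_add_one (show 2 ≤ n + 2 by omega)]
  constructor
  · rintro ⟨a, b, rfl | rfl, rfl, rfl⟩
    exacts [⟨a, Or.inl ⟨rfl, rfl⟩⟩, ⟨b, Or.inr ⟨rfl, rfl⟩⟩]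
  · rintro ⟨i, ⟨rfl, rfl⟩ | ⟨rfl, rfl⟩⟩
    exacts [⟨i, i + 1, Or.inl rfl, rfl, rfl⟩, ⟨i + 1, i, Or.inr rfl, rfl, rfl⟩]

lemma Copy.toSubgraph_adj_iff_of_apply_eq (f : Copy (cycleGraph (n + 2)) G) {i : Fin (n + 2)}
    {x v : V} (hx : f i = x) : f.toSubgraph.Adj x v ↔ v = f (i + 1) ∨ v = f (i - 1) := by
  subst hx
  rw [toSubgraph_adj_cycle]
  constructor
  · rintro ⟨j, ⟨hj, rfl⟩ | ⟨hj, rfl⟩⟩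
    · rw [f.injective hj]; exact Or.inl rfl
    · rw [← f.injective hj, add_sub_cancel_right]; exact Or.inr rfl
  · rintro (rfl | rfl)
    · exact ⟨i, Or.inl ⟨rfl, rfl⟩⟩
    · exact ⟨i - 1, Or.inr ⟨by rw [sub_add_cancel], rfl⟩⟩

end CycleGraph

def suspension {V : Type*} (G : SimpleGraph V) : SimpleGraph (V ⊕ Fin 2) where
  Adj
    | .inl a, .inl b => G.Adj a b
    | .inl _, .inr _ | .inr _, .inl _ => True
    | .inr _, .inr _ => False
  symm := ⟨by rintro (a | a) (b | b) h <;> first | exact G.adj_symm h | trivial⟩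
  loopless := ⟨by rintro (a | a) h; exacts [G.loopless.irrefl a h, h]⟩

section Suspension

variable {V : Type*} {G : SimpleGraph V}

@[simp] lemma suspension_adj_inl_inl {a b : V} :
    (suspension G).Adj (.inl a) (.inl b) ↔ G.Adj a b := Iff.rfl

@[simp] lemma suspension_adj_inl_inr {a : V} {w : Fin 2} :
    (suspension G).Adj (.inl a) (.inr w) := trivial

@[simp] lemma suspension_adj_inr_inl {a : V} {w : Fin 2} :
    (suspension G).Adj (.inr w) (.inl a) := trivial

@[simp] lemma not_suspension_adj_inr_inr {w w' : Fin 2} :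
    ¬ (suspension G).Adj (.inr w) (.inr w') := id

lemma exists_eq_inl_of_suspension_adj_inr {w : Fin 2} {v : V ⊕ Fin 2}
    (h : (suspension G).Adj (.inr w) v) : ∃ x, v = .inl x := by
  cases v with
  | inl x => exact ⟨x, rfl⟩
  | inr w' => exact absurd h not_suspension_adj_inr_inr

end Suspension

section TwoApexes

variable {m : ℕ}

def twoApexCopy (d : (cycleGraph m).Dart) (a : Fin m) (ha : a ∉ ({d.fst, d.snd} : Finset _)) :
    Copy (cycleGraph 5) (suspension (cycleGraph m)) :=
  .ofCycle ![.inr 0, .inl a, .inr 1, .inl d.fst, .inl d.snd]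
    (by
      have := d.adj.ne
      simp only [Finset.mem_insert, Finset.mem_singleton, not_or] at ha
      intro a b h
      fin_cases a <;> fin_cases b <;> simp_all [eq_comm])
    (by
      intro j
      fin_cases j <;> simp [d.adj])

@[simp] lemma coe_twoApexCopy (d : (cycleGraph m).Dart) (a : Fin m)
    (ha : a ∉ ({d.fst, d.snd} : Finset _)) :
    ⇑(twoApexCopy d a ha) = ![.inr 0, .inl a, .inr 1, .inl d.fst, .inl d.snd] := rfl

lemma inr_mem_twoApexCopy_verts (d : (cycleGraph m).Dart) (a : Fin m)
    (ha : a ∉ ({d.fst, d.snd} : Finset _)) (w : Fin 2) :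
    .inr w ∈ (twoApexCopy d a ha).toSubgraph.verts := by
  fin_cases w <;> simp

lemma exists_twoApexCopy_eq (f : Copy (cycleGraph 5) (suspension (cycleGraph m)))
    (h₀ : f 0 = .inr 0) (h₂ : f 2 = .inr 1) : ∃ d a ha, twoApexCopy d a ha = f := by
  obtain ⟨x₁, h₁⟩ : ∃ x, f 1 = .inl x :=
    exists_eq_inl_of_suspension_adj_inr (f.adj_of_apply_eq h₀ rfl)
  obtain ⟨x₃, h₃⟩ : ∃ x, f 3 = .inl x :=
    exists_eq_inl_of_suspension_adj_inr (f.adj_of_apply_eq h₂ rfl)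
  obtain ⟨x₄, h₄⟩ : ∃ x, f 4 = .inl x :=
    exists_eq_inl_of_suspension_adj_inr (f.adj_of_apply_eq rfl h₀).symm
  have h₁₃ : x₁ ≠ x₃ := fun h => absurd (f.injective (h₁.trans (h ▸ h₃.symm))) (by decide)
  have h₁₄ : x₁ ≠ x₄ := fun h => absurd (f.injective (h₁.trans (h ▸ h₄.symm))) (by decide)
  refine ⟨⟨(x₃, x₄), f.adj_of_apply_eq h₃ h₄⟩, x₁, by simp [h₁₃, h₁₄], ?_⟩
  ext j
  fin_cases j <;> simp [h₀, h₁, h₂, h₃, h₄]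

lemma exists_twoApexCopy (f : Copy (cycleGraph 5) (suspension (cycleGraph m))) {i j : Fin 5}
    (hi : f i = .inr 0) (hj : f j = .inr 1) :
    ∃ d a ha, (twoApexCopy d a ha).toSubgraph = f.toSubgraph := by
  have hji : j ≠ i := fun h => by simp [h, hi] at hj
  have hij₁ : j ≠ i + 1 := fun h => not_suspension_adj_inr_inr (f.adj_of_apply_eq hi (h ▸ hj))
  have hji₁ : i ≠ j + 1 := fun h => not_suspension_adj_inr_inr (f.adj_of_apply_eq hj (h ▸ hi))
  have key : ∀ a b : Fin 5, b ≠ a → b ≠ a + 1 → a ≠ b + 1 → b = a + 2 ∨ b = a + 3 := by decide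
  rcases key i j hji hij₁ hji₁ with rfl | rfl
  · obtain ⟨d, a, ha, h⟩ := exists_twoApexCopy_eq (f.comp (cycleGraph.rotate i).toCopy)
      (by simpa using hi) (by simpa [add_comm] using hj)
    exact ⟨d, a, ha, by rw [h, Copy.toSubgraph_comp_iso]⟩
  · obtain ⟨d, a, ha, h⟩ := exists_twoApexCopy_eq
      (f.comp ((cycleGraph.rotate i).comp cycleGraph.reflect).toCopy)
      (by simpa using hi) (by simpa [add_comm, show (-2 : Fin 5) = 3 from rfl] using hj)
    exact ⟨d, a, ha, by rw [h, Copy.toSubgraph_comp_iso]⟩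

lemma twoApexCopy_toSubgraph_injective {d d' : (cycleGraph m).Dart} {a a' : Fin m}
    {ha : a ∉ ({d.fst, d.snd} : Finset _)} {ha' : a' ∉ ({d'.fst, d'.snd} : Finset _)}
    (h : (twoApexCopy d a ha).toSubgraph = (twoApexCopy d' a' ha').toSubgraph) :
    d = d' ∧ a = a' := by
  have nbr₀ (d : (cycleGraph m).Dart) a ha x :
      (twoApexCopy d a ha).toSubgraph.Adj (.inr 0) (.inl x) ↔ x = a ∨ x = d.snd :=
    ((twoApexCopy d a ha).toSubgraph_adj_iff_of_apply_eq (i := 0) rfl).trans (by simp)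
  have nbr₁ (d : (cycleGraph m).Dart) a ha x :
      (twoApexCopy d a ha).toSubgraph.Adj (.inr 1) (.inl x) ↔ x = d.fst ∨ x = a :=
    ((twoApexCopy d a ha).toSubgraph_adj_iff_of_apply_eq (i := 2) rfl).trans (by simp)
  have e₀ x := (nbr₀ d a ha x).symm.trans (h ▸ nbr₀ d' a' ha' x)
  have e₁ x := (nbr₁ d a ha x).symm.trans (h ▸ nbr₁ d' a' ha' x)
  simp only [Finset.mem_insert, Finset.mem_singleton, not_or] at ha ha'
  have hd' := d'.adj.ne
  -- `a` is the only common neighbour of the two apexes.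
  obtain rfl : a = a' := by
    have := e₀ a; have := e₁ a; grind
  refine ⟨(Dart.ext_iff _ _).2 (Prod.ext ?_ ?_), rfl⟩
  · have := e₁ d.fst; grind
  · have := e₀ d.snd; grind

end TwoApexes

section Rim

variable {m : ℕ}

def rimCopy (h : m = 5) : Copy (cycleGraph 5) (suspension (cycleGraph m)) :=
  .ofCycle (fun j => .inl (Fin.cast h.symm j))
    (by subst h; intro a b hab; simpa using hab)
    (by subst h; intro j; simp [cycleGraph_adj_iff_eq_add_one])

@[simp] lemma coe_rimCopy (h : m = 5) : ⇑(rimCopy h) = fun j => .inl (Fin.cast h.symm j) := rfl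

lemma inr_notMem_rimCopy_verts (h : m = 5) (w : Fin 2) :
    .inr w ∉ (rimCopy h).toSubgraph.verts := by
  simp

variable [NeZero m]

lemma Copy.rim_step_up (f : Copy (cycleGraph 5) (suspension (cycleGraph m))) (hm : 2 ≤ m)
    {i : Fin 5} {x y z : Fin m} (hx : f i = .inl x) (hy : f (i + 1) = .inl y)
    (hz : f (i + 1 + 1) = .inl z) (hxy : y = x + 1) : z = y + 1 := by
  refine cycleGraph.eq_add_one_of_adj hm (f.adj_of_apply_eq hy hz) (fun h => ?_) hxy
  have hi : ∀ j : Fin 5, j + 1 + 1 ≠ j := by decide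
  exact hi i (f.injective (hz.trans (h ▸ hx.symm)))

lemma Copy.rim_step_down (f : Copy (cycleGraph 5) (suspension (cycleGraph m))) (hm : 2 ≤ m)
    {i : Fin 5} {x y z : Fin m} (hx : f i = .inl x) (hy : f (i + 1) = .inl y)
    (hz : f (i + 1 + 1) = .inl z) (hxy : x = y + 1) : y = z + 1 := by
  refine cycleGraph.add_one_eq_of_adj hm (f.adj_of_apply_eq hy hz) (fun h => ?_) hxy
  have hi : ∀ j : Fin 5, j + 1 + 1 ≠ j := by decide
  exact hi i (f.injective (hz.trans (h ▸ hx.symm)))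

lemma exists_rimCopy_of_step_up (hm : 4 ≤ m) (f : Copy (cycleGraph 5) (suspension (cycleGraph m)))
    (x : Fin 5 → Fin m) (hx : ∀ j, f j = .inl (x j)) (hup : x 1 = x 0 + 1) :
    ∃ h, (rimCopy h).toSubgraph = f.toSubgraph := by
  have h₂ : x 2 = x 1 + 1 := f.rim_step_up (by omega) (hx 0) (hx 1) (hx 2) hup
  have h₃ : x 3 = x 2 + 1 := f.rim_step_up (by omega) (hx 1) (hx 2) (hx 3) h₂
  have h₄ : x 4 = x 3 + 1 := f.rim_step_up (by omega) (hx 2) (hx 3) (hx 4) h₃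
  have h₀ : x 0 = x 4 + 1 := f.rim_step_up (by omega) (hx 3) (hx 4) (hx 0) h₄
  have h5 : ((5 : ℕ) : Fin m) = 0 := by
    push_cast
    linear_combination -(h₀ + h₄ + h₃ + h₂ + hup)
  obtain rfl : m = 5 := by
    have := (Nat.dvd_prime (by norm_num)).1 (Fin.natCast_eq_zero.1 h5)
    omega
  refine ⟨rfl, ?_⟩
  have : f = (rimCopy rfl).comp (cycleGraph.rotate (x 0)).toCopy := by
    ext j
    fin_cases j <;> simp [hx, h₂, h₃, h₄, hup] <;> ring
  rw [this, Copy.toSubgraph_comp_iso]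

lemma exists_rimCopy (hm : 4 ≤ m) (f : Copy (cycleGraph 5) (suspension (cycleGraph m)))
    (x : Fin 5 → Fin m) (hx : ∀ j, f j = .inl (x j)) :
    ∃ h, (rimCopy h).toSubgraph = f.toSubgraph := by
  -- Rotating or reflecting makes the step from `x 0` to `x 1` ascending.
  rcases (cycleGraph_adj_iff_eq_add_one (by omega)).1 (f.adj_of_apply_eq (hx 4) (hx 0)) with
    hup | hdown
  · rw [← f.toSubgraph_comp_iso (cycleGraph.rotate 4)]
    exact exists_rimCopy_of_step_up hm _ (fun j => x (j + 4)) (fun j => hx (j + 4)) hup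
  · rw [← f.toSubgraph_comp_iso cycleGraph.reflect]
    exact exists_rimCopy_of_step_up hm _ (fun j => x (-j)) (fun j => hx (-j)) hdown

end Rim

section OneApex

variable {m : ℕ} [NeZero m]

def apexPathCopy (hm : 4 ≤ m) (w : Fin 2) (i : Fin m) :
    Copy (cycleGraph 5) (suspension (cycleGraph m)) :=
  .ofCycle ![.inr w, .inl i, .inl (i + 1), .inl (i + 2), .inl (i + 3)]
    (by
      have small : ∀ k, k < 4 → k % m = k := fun k hk => Nat.mod_eq_of_lt (by omega)
      intro a b h
      fin_cases a <;> fin_cases b <;> simp_all [Fin.ext_iff])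
    (by
      intro j
      fin_cases j <;> simp [cycleGraph_adj_iff_eq_add_one (show 2 ≤ m by omega), add_assoc] <;>
        norm_num)

@[simp] lemma coe_apexPathCopy (hm : 4 ≤ m) (w : Fin 2) (i : Fin m) :
    ⇑(apexPathCopy hm w i) = ![.inr w, .inl i, .inl (i + 1), .inl (i + 2), .inl (i + 3)] := rfl

lemma inr_mem_apexPathCopy_verts_iff (hm : 4 ≤ m) {w w' : Fin 2} {i : Fin m} :
    .inr w' ∈ (apexPathCopy hm w i).toSubgraph.verts ↔ w' = w := by
  simp [eq_comm]

lemma apexPathCopy_eq_of_step_up (hm : 4 ≤ m)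
    (f : Copy (cycleGraph 5) (suspension (cycleGraph m))) {w : Fin 2} {x₁ x₂ x₃ x₄ : Fin m}
    (h₀ : f 0 = .inr w) (h₁ : f 1 = .inl x₁) (h₂ : f 2 = .inl x₂) (h₃ : f 3 = .inl x₃)
    (h₄ : f 4 = .inl x₄) (hup : x₂ = x₁ + 1) :
    apexPathCopy hm w x₁ = f := by
  have h₃₂ : x₃ = x₂ + 1 := f.rim_step_up (by omega) h₁ h₂ h₃ hup
  have h₄₃ : x₄ = x₃ + 1 := f.rim_step_up (by omega) h₂ h₃ h₄ h₃₂
  ext j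
  fin_cases j <;> simp [h₀, h₁, h₂, h₃, h₄, hup, h₃₂, h₄₃] <;> ring

lemma exists_apexPathCopy (hm : 4 ≤ m) (f : Copy (cycleGraph 5) (suspension (cycleGraph m)))
    {w : Fin 2} (h₀ : f 0 = .inr w) (h₂ : ∃ x, f 2 = .inl x) (h₃ : ∃ x, f 3 = .inl x) :
    ∃ i, (apexPathCopy hm w i).toSubgraph = f.toSubgraph := by
  obtain ⟨x₁, h₁⟩ : ∃ x, f 1 = .inl x :=
    exists_eq_inl_of_suspension_adj_inr (f.adj_of_apply_eq h₀ rfl)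
  obtain ⟨x₄, h₄⟩ : ∃ x, f 4 = .inl x :=
    exists_eq_inl_of_suspension_adj_inr (f.adj_of_apply_eq rfl h₀).symm
  obtain ⟨x₂, h₂⟩ := h₂
  obtain ⟨x₃, h₃⟩ := h₃
  rcases (cycleGraph_adj_iff_eq_add_one (by omega)).1 (f.adj_of_apply_eq h₁ h₂) with hup | hdown
  · exact ⟨x₁, by rw [apexPathCopy_eq_of_step_up hm f h₀ h₁ h₂ h₃ h₄ hup]⟩
  · have h₂₃ : x₂ = x₃ + 1 := f.rim_step_down (by omega) h₁ h₂ h₃ hdown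
    have h₃₄ : x₃ = x₄ + 1 := f.rim_step_down (by omega) h₂ h₃ h₄ h₂₃
    refine ⟨x₄, ?_⟩
    rw [← f.toSubgraph_comp_iso cycleGraph.reflect, apexPathCopy_eq_of_step_up hm
      (f.comp cycleGraph.reflect.toCopy) h₀ h₄ h₃ h₂ h₁ h₃₄]

lemma apexPathCopy_toSubgraph_injective (hm : 4 ≤ m) {w w' : Fin 2} {i i' : Fin m}
    (h : (apexPathCopy hm w i).toSubgraph = (apexPathCopy hm w' i').toSubgraph) :
    w = w' ∧ i = i' := by
  have apex_mem : .inr w' ∈ (apexPathCopy hm w' i').toSubgraph.verts := by simp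
  obtain rfl : w = w' := ((inr_mem_apexPathCopy_verts_iff hm).1 (h ▸ apex_mem)).symm
  -- The apex has rim neighbours `i` and `i + 3`, and only `i` is adjacent to its successor.
  have apex_adj : (apexPathCopy hm w i).toSubgraph.Adj (.inr w) (.inl i') :=
    h ▸ ((apexPathCopy hm w i').toSubgraph_adj_iff_of_apply_eq (i := 0) rfl).2 (Or.inl rfl)
  replace apex_adj :=
    ((apexPathCopy hm w i).toSubgraph_adj_iff_of_apply_eq (i := 0) rfl).1 apex_adj
  simp at apex_adj
  rcases apex_adj with rfl | rfl
  · exact ⟨rfl, rfl⟩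
  have path_adj : (apexPathCopy hm w i).toSubgraph.Adj (.inl (i + 3)) (.inl (i + 3 + 1)) :=
    h ▸ ((apexPathCopy hm w (i + 3)).toSubgraph_adj_iff_of_apply_eq (i := 1) rfl).2 (Or.inl rfl)
  replace path_adj :=
    ((apexPathCopy hm w i).toSubgraph_adj_iff_of_apply_eq (i := 4) rfl).1 path_adj
  simp at path_adj
  have h2 : ((2 : ℕ) : Fin m) = 0 := by
    push_cast
    linear_combination path_adj
  exact absurd (Fin.natCast_eq_zero.1 h2) (Nat.not_dvd_of_pos_of_lt two_pos (by omega))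

end OneApex

section Count

variable {m : ℕ}

abbrev C5Shape (m : ℕ) : Type :=
  (Fin 2 × Fin m) ⊕ (Σ d : (cycleGraph m).Dart, ({d.fst, d.snd}ᶜ : Finset (Fin m))) ⊕
    PLift (m = 5)

lemma C5Shape.card (hm : 3 ≤ m) :
    Fintype.card (C5Shape m) = 2 * m + 2 * m * (m - 2) + if m = 5 then 1 else 0 := by
  simp only [Fintype.card_sum, Fintype.card_prod, Fintype.card_sigma, Fintype.card_coe,
    Finset.card_compl, fun d : (cycleGraph m).Dart => Finset.card_pair d.adj.ne,
    Finset.sum_const, Finset.card_univ, card_dart_cycleGraph hm, Fintype.card_fin, smul_eq_mul]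
  rcases eq_or_ne m 5 with rfl | h <;> simp [*]

variable [NeZero m]

def C5Shape.copy (hm : 4 ≤ m) : C5Shape m → Copy (cycleGraph 5) (suspension (cycleGraph m))
  | .inl (w, i) => apexPathCopy hm w i
  | .inr (.inl ⟨d, a⟩) => twoApexCopy d a (Finset.mem_compl.1 a.2)
  | .inr (.inr h) => rimCopy h.down

lemma C5Shape.exists_copy_toSubgraph_eq (hm : 4 ≤ m)
    (f : Copy (cycleGraph 5) (suspension (cycleGraph m))) :
    ∃ p : C5Shape m, (p.copy hm).toSubgraph = f.toSubgraph := by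
  by_cases hB : (∃ i, f i = .inr 0) ∧ ∃ j, f j = .inr 1
  · obtain ⟨⟨i, hi⟩, j, hj⟩ := hB
    obtain ⟨d, a, ha, h⟩ := exists_twoApexCopy f hi hj
    exact ⟨.inr (.inl ⟨d, a, Finset.mem_compl.2 ha⟩), h⟩
  by_cases hA : ∃ i w, f i = .inr w
  · obtain ⟨i, w, hi⟩ := hA
    have inl_of_ne (j : Fin 5) (hj : j ≠ i) : ∃ x, f j = .inl x := by
      rcases h : f j with x | w'
      · exact ⟨x, rfl⟩
      by_cases hw : w' = w
      · exact absurd (f.injective (h.trans (hw ▸ hi.symm))) hj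
      · refine absurd ?_ hB
        fin_cases w <;> fin_cases w'
        exacts [absurd rfl hw, ⟨⟨i, hi⟩, j, h⟩, ⟨⟨j, h⟩, i, hi⟩, absurd rfl hw]
    obtain ⟨k, hk⟩ := exists_apexPathCopy hm (f.comp (cycleGraph.rotate i).toCopy) (w := w)
      (by simpa using hi) (inl_of_ne (2 + i) (by simp)) (inl_of_ne (3 + i) (by simp))
    exact ⟨.inl (w, k), hk.trans (f.toSubgraph_comp_iso _)⟩
  · simp only [not_exists] at hA
    have (j : Fin 5) : ∃ x, f j = .inl x := by
      rcases h : f j with x | w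
      exacts [⟨x, rfl⟩, absurd h (hA j w)]
    choose x hx using this
    obtain ⟨h, hC⟩ := exists_rimCopy hm f x hx
    exact ⟨.inr (.inr ⟨h⟩), hC⟩

lemma C5Shape.copy_toSubgraph_injective (hm : 4 ≤ m) :
    Injective fun p : C5Shape m => (p.copy hm).toSubgraph := by
  rintro (⟨w, i⟩ | ⟨d, a, ha⟩ | ⟨⟨h⟩⟩) (⟨w', i'⟩ | ⟨d', a', ha'⟩ | ⟨⟨h'⟩⟩) hpq <;>
    dsimp only [C5Shape.copy] at hpq
  · obtain ⟨rfl, rfl⟩ := apexPathCopy_toSubgraph_injective hm hpq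
    rfl
  · have h₀ := hpq ▸ inr_mem_twoApexCopy_verts d' a' _ 0
    have h₁ := hpq ▸ inr_mem_twoApexCopy_verts d' a' _ 1
    rw [inr_mem_apexPathCopy_verts_iff] at h₀ h₁
    exact absurd (h₀.trans h₁.symm) (by decide)
  · exact (inr_notMem_rimCopy_verts h' w (hpq ▸ by simp)).elim
  · have h₀ := hpq ▸ inr_mem_twoApexCopy_verts d a _ 0
    have h₁ := hpq ▸ inr_mem_twoApexCopy_verts d a _ 1
    rw [inr_mem_apexPathCopy_verts_iff] at h₀ h₁
    exact absurd (h₀.trans h₁.symm) (by decide)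
  · obtain ⟨rfl, rfl⟩ := twoApexCopy_toSubgraph_injective hpq
    rfl
  · exact (inr_notMem_rimCopy_verts h' 0 (hpq ▸ inr_mem_twoApexCopy_verts d a _ 0)).elim
  · exact (inr_notMem_rimCopy_verts h w' (hpq ▸ by simp)).elim
  · exact (inr_notMem_rimCopy_verts h 0 (hpq ▸ inr_mem_twoApexCopy_verts d' a' _ 0)).elim
  · rfl

theorem c5Count_suspension_cycleGraph (hm : 4 ≤ m) :
    (suspension (cycleGraph m)).c5Count = 2 * m * (m - 1) + if m = 5 then 1 else 0 := by
  have : 2 * m * (m - 1) = 2 * m + 2 * m * (m - 2) := by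
    obtain ⟨k, rfl⟩ : ∃ k, m = k + 2 := ⟨m - 2, by omega⟩
    simp only [show k + 2 - 1 = k + 1 by omega, Nat.add_sub_cancel]
    ring
  rw [this, ← C5Shape.card (by omega), ← Nat.card_eq_fintype_card, c5Count]
  refine (Nat.card_eq_of_bijective
    (fun p => ⟨(p.copy hm).toSubgraph, ⟨(p.copy hm).isoToSubgraph.symm⟩⟩) ⟨?_, ?_⟩).symm
  · exact fun p q h => C5Shape.copy_toSubgraph_injective hm (congrArg Subtype.val h)
  · rintro ⟨H, ⟨e⟩⟩
    obtain ⟨f, rfl⟩ : H ∈ Set.range Copy.toSubgraph := by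
      rw [Copy.range_toSubgraph]
      exact ⟨e.symm⟩
    obtain ⟨p, hp⟩ := C5Shape.exists_copy_toSubgraph_eq hm f
    exact ⟨p, Subtype.ext hp⟩

end Count

end SimpleGraph

open SimpleGraph

lemma Dgraph_adj_finSumFinEquiv {m : ℕ} (hm : 3 ≤ m) (x y : Fin m ⊕ Fin 2) :
    (Dgraph (m + 2)).Adj (finSumFinEquiv x) (finSumFinEquiv y) ↔
      (suspension (cycleGraph m)).Adj x y := by
  have : NeZero m := ⟨by omega⟩
  have add_one_mod (a : Fin m) :
      (a.val + 1) % m = if a.val + 1 = m then 0 else a.val + 1 := by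
    split_ifs with h
    · rw [h, Nat.mod_self]
    · exact Nat.mod_eq_of_lt (by omega)
  rcases x with i | w <;> rcases y with j | w' <;>
    simp [Dgraph, cycleGraph_adj_iff_eq_add_one (show 2 ≤ m by omega), Fin.ext_iff, Fin.val_add]
  · have := i.isLt; have := j.isLt
    rw [add_one_mod, add_one_mod]
    split_ifs <;> omega
  all_goals omega

def Dgraph.isoSuspension {m : ℕ} (hm : 3 ≤ m) : Dgraph (m + 2) ≃g suspension (cycleGraph m) :=
  (⟨finSumFinEquiv, Dgraph_adj_finSumFinEquiv hm _ _⟩ : suspension (cycleGraph m) ≃g _).symm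

theorem Dgraph_c5Count_eq {n : ℕ} (hn : 6 ≤ n) :
    (Dgraph n).c5Count = 2 * (n - 2) * (n - 3) + if n = 7 then 1 else 0 := by
  obtain ⟨m, rfl⟩ : ∃ m, n = m + 2 := ⟨n - 2, by omega⟩
  have : NeZero m := ⟨by omega⟩
  rw [(Dgraph.isoSuspension (by omega)).c5Count_eq, c5Count_suspension_cycleGraph (by omega),
    show m + 2 - 2 = m by omega, show m + 2 - 3 = m - 1 by omega]
  simp only [show m + 2 = 7 ↔ m = 5 by omega]

/-- For `n = 6` or `n ≥ 8`, the graph `D n` contains exactly `2n² − 10n + 12` copies of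
`C₅`; the graph `D 7` contains exactly 41 copies of `C₅`; equivalently, for `n ≥ 8`,
`D n` contains exactly `2(n−2)(n−3)` copies of `C₅`. -/
theorem c5Count_Dgraph :
    (∀ n : ℕ, n = 6 ∨ 8 ≤ n → (Dgraph n).c5Count = 2 * n ^ 2 - 10 * n + 12) ∧
    (Dgraph 7).c5Count = 41 ∧
    (∀ n : ℕ, 8 ≤ n → (Dgraph n).c5Count = 2 * (n - 2) * (n - 3)) := by
  refine ⟨fun n hn => ?_, by simp [Dgraph_c5Count_eq], fun n hn => ?_⟩
  · rw [Dgraph_c5Count_eq (by omega), if_neg (by omega), add_zero]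
    obtain ⟨k, rfl⟩ : ∃ k, n = k + 3 := ⟨n - 3, by omega⟩
    have : 10 * (k + 3) ≤ 2 * (k + 3) ^ 2 := by nlinarith [show 3 ≤ k by omega]
    simp only [show k + 3 - 2 = k + 1 by omega, Nat.add_sub_cancel]
    zify [this]
    ring
  · rw [Dgraph_c5Count_eq (by omega), if_neg (by omega), add_zero]
end

section
/- Let G be a planar simple graph and let {u,v} be an edge of G. Then the subgraph of G induced by N(u) ∩ N(v) is a linear forest, i.e., a disjoint union of paths (equivalently: it is acyclic and every vertex has degree at most 2 in it). -/
/-! A cycle in `G[N(u) ∩ N(v)]` contracts to a triangle, and `u`, `v` are adjacent to each other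
and to every vertex of it, so `G` would have a `K₅` minor. A vertex `x` with three neighbours
`a, b, c` in `G[N(u) ∩ N(v)]` gives a `K₃,₃` subgraph with sides `{u, v, x}` and `{a, b, c}`. -/

open SimpleGraph

/-- `H` is a minor of `G`: there is a family of nonempty, connected, pairwise disjoint
branch sets in `G`, one for each vertex of `H`, with an edge of `G` between the branch
sets of any two adjacent vertices of `H`. -/
def SimpleGraph.IsMinor {W V : Type*} (H : SimpleGraph W) (G : SimpleGraph V) : Prop :=
  ∃ f : W → Set V,
    (∀ w, (f w).Nonempty) ∧
    (∀ w, (G.induce (f w)).Connected) ∧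
    (Pairwise fun w₁ w₂ => Disjoint (f w₁) (f w₂)) ∧
    ∀ ⦃w₁ w₂⦄, H.Adj w₁ w₂ → ∃ u ∈ f w₁, ∃ v ∈ f w₂, G.Adj u v

/-- A simple graph is planar iff (by Wagner's theorem) it has neither `K₅` nor `K₃,₃`
as a minor. -/
def SimpleGraph.IsPlanar {V : Type*} (G : SimpleGraph V) : Prop :=
  ¬ (completeGraph (Fin 5)).IsMinor G ∧
    ¬ (completeBipartiteGraph (Fin 3) (Fin 3)).IsMinor G
namespace SimpleGraph

variable {V W : Type*} {G : SimpleGraph V} {H : SimpleGraph W}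

structure IsMinorModel (H : SimpleGraph W) (G : SimpleGraph V) (f : W → Set V) : Prop where
  nonempty : ∀ w, (f w).Nonempty
  connected : ∀ w, (G.induce (f w)).Connected
  pairwise_disjoint : Pairwise fun w₁ w₂ => Disjoint (f w₁) (f w₂)
  exists_adj : ∀ ⦃w₁ w₂⦄, H.Adj w₁ w₂ → ∃ x ∈ f w₁, ∃ y ∈ f w₂, G.Adj x y

theorem IsMinorModel.isMinor {f : W → Set V} (hf : H.IsMinorModel G f) : H.IsMinor G :=
  ⟨f, hf.nonempty, hf.connected, hf.pairwise_disjoint, hf.exists_adj⟩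

theorem IsContained.isMinor (h : H ⊑ G) : H.IsMinor G := by
  obtain ⟨φ⟩ := h
  refine IsMinorModel.isMinor (f := fun w => {φ w})
    ⟨fun _ => Set.singleton_nonempty _, ?_, ?_, ?_⟩
  · intro w
    rw [induce_singleton_eq_top]
    exact connected_top
  · exact fun w₁ w₂ h => Set.disjoint_singleton.mpr (φ.injective.ne h)
  · exact fun w₁ w₂ h => ⟨_, rfl, _, rfl, φ.toHom.map_adj h⟩

theorem isMinorModel_completeGraph_fin_one {C : Set V} (hC : (G.induce C).Connected) :
    (completeGraph (Fin 1)).IsMinorModel G fun _ => C where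
  nonempty _ := Set.nonempty_coe_sort.mp hC.nonempty
  connected _ := hC
  pairwise_disjoint i j h := absurd (Subsingleton.elim i j) h
  exists_adj i j h := absurd (Subsingleton.elim i j) h

theorem IsMinorModel.cons {n : ℕ} {f : Fin n → Set V}
    (hf : (completeGraph (Fin n)).IsMinorModel G f) {a : V} (ha : ∀ i, a ∉ f i) (hadj : ∀ i, ∃ x ∈ f i, G.Adj a x) :
    (completeGraph (Fin (n + 1))).IsMinorModel G (Fin.cons {a} f : Fin (n + 1) → Set V) where
  nonempty i := by
    cases i using Fin.cases
    exacts [Set.singleton_nonempty a, by simpa using hf.nonempty _]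
  connected i := by
    cases i using Fin.cases
    · rw [Fin.cons_zero, induce_singleton_eq_top]
      exact connected_top
    · rw [Fin.cons_succ]
      exact hf.connected _
  pairwise_disjoint i j hij := by
    cases i using Fin.cases <;> cases j using Fin.cases
    · exact absurd rfl hij
    · simpa using ha _
    · simpa using ha _
    · simpa using hf.pairwise_disjoint (fun h => hij (congrArg Fin.succ h))
  exists_adj i j hij := by
    cases i using Fin.cases <;> cases j using Fin.cases
    · exact absurd rfl hij
    · simpa using hadj _
    · obtain ⟨x, hx, hax⟩ := hadj _
      simpa using ⟨x, hx, hax.symm⟩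
    · simpa using hf.exists_adj (fun h => hij (congrArg Fin.succ h))

theorem Walk.IsCycle.exists_isMinorModel_completeGraph_three {r : V} {c : G.Walk r r}
    (hc : c.IsCycle) :
    ∃ f : Fin 3 → Set V, (completeGraph (Fin 3)).IsMinorModel G f ∧
      ∀ i, f i ⊆ {x | x ∈ c.support} := by
  rcases c with _ | @⟨_, b, _, hrb, _ | @⟨_, e, _, hbe, _ | ⟨hef, q⟩⟩⟩
  · exact absurd rfl hc.ne_nil
  · simpa using hc.three_le_length
  · simpa using hc.three_le_length
  -- the cycle is `r → b → e ⇝ d → r`; the branch sets are `{r}`, `{b}` and the path `e ⇝ d`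
  obtain ⟨d, q', hdr, hq⟩ := Walk.exists_cons_eq_concat hef q
  obtain ⟨hb, hr⟩ : (b ∉ q'.support ∧ b ≠ r) ∧ r ∉ q'.support := by
    have hnd := hc.support_nodup
    simp only [Walk.support_cons, List.tail_cons, hq, Walk.support_concat, List.nodup_cons,
      List.nodup_append, List.mem_append, List.mem_singleton] at hnd
    exact ⟨not_or.mp hnd.1, fun h => hnd.2.2.2 r h r rfl rfl⟩
  have hK₁ := isMinorModel_completeGraph_fin_one q'.connected_induce_support
  have hK₂ := hK₁.cons (a := b) (fun _ => hb.1) (fun _ => ⟨e, q'.start_mem_support, hbe⟩)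
  have hK₃ := hK₂.cons (a := r) (by simp [Fin.forall_fin_succ, hb.2.symm, hr])
    (Fin.forall_fin_succ.mpr ⟨⟨b, rfl, hrb⟩, fun _ => ⟨d, q'.end_mem_support, hdr.symm⟩⟩)
  refine ⟨_, hK₃, ?_⟩
  simp +contextual [Fin.forall_fin_succ, hq]

theorem isAcyclic_induce_neighborSet_inter (hG : ¬ (completeGraph (Fin 5)).IsMinor G) {u v : V}
    (huv : G.Adj u v) : (G.induce (G.neighborSet u ∩ G.neighborSet v)).IsAcyclic := by
  set S := G.neighborSet u ∩ G.neighborSet v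
  intro r c hc
  obtain ⟨f, hf, hfc⟩ :=
    (hc.map (f := (Embedding.induce (G := G) S).toHom) (Embedding.induce (G := G) S).injective
      ).exists_isMinorModel_completeGraph_three
  have hfS : ∀ i, f i ⊆ S := fun i x hx => by
    obtain ⟨y, -, rfl⟩ := List.mem_map.mp (Walk.support_map _ c ▸ hfc i hx)
    exact y.2
  have hv : ∀ i, v ∉ f i := fun i hx => G.irrefl (hfS i hx).2
  have hu : ∀ i, u ∉ f i := fun i hx => G.irrefl (hfS i hx).1
  have hK₄ := hf.cons (a := v) hv fun i => (hf.nonempty i).imp fun x hx => ⟨hx, (hfS i hx).2⟩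
  have hK₅ := hK₄.cons (a := u) (Fin.forall_fin_succ.mpr ⟨huv.ne, hu⟩)
    (Fin.forall_fin_succ.mpr ⟨⟨v, rfl, huv⟩,
      fun i => (hf.nonempty i).imp fun x hx => ⟨hx, (hfS i hx).1⟩⟩)
  exact hG hK₅.isMinor

theorem ncard_neighborSet_induce_neighborSet_inter_le_two
    (hG : ¬ (completeBipartiteGraph (Fin 3) (Fin 3)).IsMinor G) {u v : V} (huv : u ≠ v)
    (x : ↥(G.neighborSet u ∩ G.neighborSet v)) :
    ((G.induce (G.neighborSet u ∩ G.neighborSet v)).neighborSet x).ncard ≤ 2 := by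
  classical
  by_contra! hx
  obtain ⟨t, htx, ht⟩ := Set.exists_subset_card_eq (show 3 ≤ _ from hx)
  obtain ⟨a, b, c, hab, hac, hbc, rfl⟩ := Set.ncard_eq_three.mp ht
  refine hG (IsContained.isMinor (completeBipartiteGraph_isContained_iff.mpr
    ⟨{u, v, ↑x}, {↑a, ↑b, ↑c}, ?_, ?_, ?_⟩))
  · exact Finset.card_eq_three.mpr ⟨u, v, x, huv, x.2.1.ne, x.2.2.ne, rfl⟩
  · exact Finset.card_eq_three.mpr ⟨a, b, c, Subtype.val_injective.ne hab,
      Subtype.val_injective.ne hac, Subtype.val_injective.ne hbc, rfl⟩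
  · intro p hp q hq
    simp only [Finset.coe_insert, Finset.coe_singleton, Set.mem_insert_iff,
      Set.mem_singleton_iff] at hp hq
    obtain ⟨y, hy, rfl⟩ : ∃ y ∈ ({a, b, c} : Set _), q = ↑y := by
      rcases hq with rfl | rfl | rfl <;> simp
    rcases hp with rfl | rfl | rfl
    exacts [y.2.1, y.2.2, htx hy]

end SimpleGraph

theorem common_nbhd_linear_forest_general {V : Type*} (G : SimpleGraph V)
    (hG : G.IsPlanar) (u v : V) (huv : G.Adj u v) :
    (G.induce (G.neighborSet u ∩ G.neighborSet v)).IsAcyclic ∧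
    ∀ x, ((G.induce (G.neighborSet u ∩ G.neighborSet v)).neighborSet x).ncard ≤ 2 :=
  ⟨G.isAcyclic_induce_neighborSet_inter hG.1 huv,
    G.ncard_neighborSet_induce_neighborSet_inter_le_two hG.2 huv.ne⟩

/-- If `G` is planar and `{u, v}` is an edge of `G`, then the subgraph induced by
`N(u) ∩ N(v)` is a linear forest: it is acyclic and every vertex has degree at most 2
in it. -/
theorem common_nbhd_linear_forest {V : Type*} [Fintype V] (G : SimpleGraph V)
    (hG : G.IsPlanar) (u v : V) (huv : G.Adj u v) :
    (G.induce (G.neighborSet u ∩ G.neighborSet v)).IsAcyclic ∧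
    ∀ x, ((G.induce (G.neighborSet u ∩ G.neighborSet v)).neighborSet x).ncard ≤ 2 :=
  common_nbhd_linear_forest_general G hG u v huv
end
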